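/- Let G be a finite group, π a set of primes, and q ∈ π. A Sylow q-subgroup of G is contained in the hypercentre Z_∞(G) if and only if the q-part of |S_q(G_π)| equals |G|_q. -/

import Mathlib

/-- A π-element: every prime dividing its order lies in π. -/
def IsPiElement {G : Type*} [Group G] (π : Set ℕ) (g : G) : Prop :=
  ∀ p : ℕ, p.Prime → p ∣ orderOf g → p ∈ π

/-!
Induct on `|G|`. If `Z(G)` contains an element `z` of order `q`, pass to `G/⟨z⟩`: a Sylow
`q`-subgroup lies in the hypercentre iff its image does, and `g ∈ S_q(G_π)` iff its image lies in
`S_q((G/⟨z⟩)_π)`, so both `|S_q(G_π)|` and `|G|` lose exactly one factor `q`. Otherwise both sides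
say that `q ∤ |G|`. For the left side: an element of order `q` in the hypercentre produces one in
the centre, since for `w ∈ Z₂(G) \ Z(G)` with `w^q ∈ Z(G)` some commutator `⁅w, g⁆` is central
of order `q`. For the right side: a Sylow `q`-subgroup acting on `S_q(G_π)` by conjugation fixes
exactly the central π-elements, so `|S_q(G_π)|` is congruent mod `q` to the order of a group
without elements of order `q`.
-/

section

open Subgroup QuotientGroup
open scoped commutatorElement

section

variable {G H : Type*} [Group G] [Group H] {π : Set ℕ} {q : ℕ}

namespace IsPiElement

theorem one : IsPiElement π (1 : G) := fun _ hp hdvd =>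
  absurd (Nat.dvd_one.mp (by simpa using hdvd)) hp.ne_one

theorem of_orderOf_dvd {x : G} {y : H} (hx : IsPiElement π x) (h : orderOf y ∣ orderOf x) :
    IsPiElement π y :=
  fun p hp hdvd => hx p hp (hdvd.trans h)

theorem inv {x : G} (hx : IsPiElement π x) : IsPiElement π x⁻¹ :=
  hx.of_orderOf_dvd (orderOf_inv x).dvd

theorem mul_of_commute {x y : G} (hx : IsPiElement π x) (hy : IsPiElement π y)
    (hxy : Commute x y) : IsPiElement π (x * y) := fun p hp hdvd =>
  (hp.dvd_mul.mp (hdvd.trans hxy.orderOf_mul_dvd_mul_orderOf)).elim (hx p hp) (hy p hp)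

theorem map {x : G} (hx : IsPiElement π x) (f : G →* H) : IsPiElement π (f x) :=
  hx.of_orderOf_dvd (orderOf_map_dvd f x)

theorem of_map_of_ker_isPGroup {x : G} {f : G →* H} (hq : q.Prime) (hqπ : q ∈ π)
    (hker : IsPGroup q f.ker) (hx : IsPiElement π (f x)) : IsPiElement π x := by
  have hmem : x ^ orderOf (f x) ∈ f.ker := by rw [MonoidHom.mem_ker, map_pow, pow_orderOf_eq_one]
  obtain ⟨t, ht⟩ := hker ⟨_, hmem⟩
  have hdvd : orderOf x ∣ orderOf (f x) * q ^ t := by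
    refine orderOf_dvd_of_pow_eq_one ?_
    rw [pow_mul]
    simpa using congrArg Subtype.val ht
  intro p hp hpx
  rcases hp.dvd_mul.mp (hpx.trans hdvd) with h | h
  · exact hx p hp h
  · rwa [(Nat.prime_dvd_prime_iff_eq hp hq).mp (hp.dvd_of_dvd_pow h)]

end IsPiElement

theorem index_centralizer_mulEquiv (e : G ≃* H) (g : G) :
    (centralizer {e g}).index = (centralizer {g}).index := by
  have : (centralizer {e g}).comap e.toMonoidHom = centralizer {g} := by
    ext h
    simp [mem_centralizer_singleton_iff, ← map_mul, e.injective.eq_iff]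
  rw [← this, index_comap_of_surjective _ e.surjective]

theorem index_centralizer_map_dvd {f : G →* H} (hf : Function.Surjective f) (g : G) :
    (centralizer {f g}).index ∣ (centralizer {g}).index := by
  refine (index_dvd_of_le ?_).trans (index_map_dvd _ hf)
  simpa using map_centralizer_le_centralizer_image {g} f

theorem commutatorElement_mul_left {x y g : G} (h : ⁅y, g⁆ ∈ center G) :
    ⁅x * y, g⁆ = ⁅x, g⁆ * ⁅y, g⁆ := by
  have hc := mem_center_iff.mp h
  calc ⁅x * y, g⁆ = x * ⁅y, g⁆ * (g * x⁻¹ * g⁻¹) := by simp only [commutatorElement_def]; group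
    _ = ⁅y, g⁆ * ⁅x, g⁆ := by rw [hc x, commutatorElement_def x]; group
    _ = ⁅x, g⁆ * ⁅y, g⁆ := (hc _).symm

theorem index_centralizer_dvd_card_mul_index_centralizer_mk {N : Subgroup G} [N.Normal]
    (hN : N ≤ center G) (g : G) :
    (centralizer {g}).index ∣ Nat.card N * (centralizer {(g : G ⧸ N)}).index := by
  set D := (centralizer {(g : G ⧸ N)}).comap (mk' N)
  have hD : ∀ x ∈ D, ⁅x, g⁆ ∈ N := fun x hx => by
    rw [← QuotientGroup.eq_one_iff, ← mk'_apply, map_commutatorElement,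
      commutatorElement_eq_one_iff_mul_comm]
    exact (mem_centralizer_singleton_iff.mp hx)
  -- `[D : C(g)]` is the size of the image of the homomorphism `x ↦ ⁅x, g⁆` into the central `N`.
  let φ : D →* N := MonoidHom.mk' (fun x => ⟨⁅(x : G), g⁆, hD x x.2⟩) fun x y =>
    Subtype.ext (commutatorElement_mul_left (hN (hD y y.2)))
  have hker : (centralizer {g}).subgroupOf D = φ.ker := by
    ext x
    simp [φ, mem_subgroupOf, mem_centralizer_singleton_iff, commutatorElement_eq_one_iff_mul_comm]
  have hCD : centralizer {g} ≤ D := fun x hx => by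
    simpa [D, mem_centralizer_singleton_iff] using
      congrArg (mk' N) (mem_centralizer_singleton_iff.mp hx)
  rw [← relIndex_mul_index hCD, index_comap_of_surjective _ (mk'_surjective N), relIndex, hker,
    index_ker]
  exact mul_dvd_mul_right (card_subgroup_dvd_card _) _

theorem commutatorElement_pow_left {w g : G} (h : ⁅w, g⁆ ∈ center G) (n : ℕ) :
    ⁅w ^ n, g⁆ = ⁅w, g⁆ ^ n := by
  induction n with
  | zero => simp
  | succ n ih => rw [pow_succ, commutatorElement_mul_left h, ih, pow_succ]

theorem normal_of_le_center {N : Subgroup G} (hN : N ≤ center G) : N.Normal :=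
  ⟨fun n hn g => by rwa [mem_center_iff.mp (hN hn) g, mul_inv_cancel_right]⟩

end

/-- `S_q(G_π)`, with the class size of `g` written as the index of its centralizer. -/
def qClassPiElements (π : Set ℕ) (q : ℕ) (G : Type*) [Group G] : SubMulAction (ConjAct G) G where
  carrier := {g | IsPiElement π g ∧ ∃ k : ℕ, (centralizer {g}).index = q ^ k}
  smul_mem' c g := fun ⟨hg, k, hk⟩ => by
    rw [ConjAct.smul_eq_mulAut_conj]
    exact ⟨hg.of_orderOf_dvd (MulEquiv.orderOf_eq _ _).dvd, k,
      by rw [index_centralizer_mulEquiv, hk]⟩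

def piCenter (π : Set ℕ) (G : Type*) [Group G] : Subgroup G where
  carrier := {g | g ∈ center G ∧ IsPiElement π g}
  one_mem' := ⟨one_mem _, .one⟩
  mul_mem' := fun ⟨ha, hπa⟩ ⟨hb, hπb⟩ =>
    ⟨mul_mem ha hb, hπa.mul_of_commute hπb (mem_center_iff.mp hb _)⟩
  inv_mem' := fun ⟨ha, hπa⟩ => ⟨inv_mem ha, hπa.inv⟩

section

variable {G : Type*} [Group G] {π : Set ℕ} {q : ℕ}

theorem mem_qClassPiElements_of_mem_center {g : G} (hg : g ∈ center G) (hπ : IsPiElement π g) :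
    g ∈ qClassPiElements π q G :=
  ⟨hπ, 0, by rwa [pow_zero, index_eq_one, centralizer_eq_top_iff_subset, Set.singleton_subset_iff]⟩

theorem mk_mem_qClassPiElements_iff [Fact q.Prime] {N : Subgroup G} [N.Normal] [Finite N]
    (hN : N ≤ center G) (hNq : IsPGroup q N) (hqπ : q ∈ π) {g : G} :
    (g : G ⧸ N) ∈ qClassPiElements π q (G ⧸ N) ↔ g ∈ qClassPiElements π q G := by
  have hq : q.Prime := Fact.out
  constructor
  · rintro ⟨hπ, k, hk⟩
    refine ⟨hπ.of_map_of_ker_isPGroup (f := mk' N) hq hqπ (by rwa [ker_mk']), ?_⟩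
    obtain ⟨a, ha⟩ := IsPGroup.iff_card.mp hNq
    have := index_centralizer_dvd_card_mul_index_centralizer_mk hN g
    rw [ha, hk, ← pow_add] at this
    exact ((Nat.dvd_prime_pow hq).mp this).imp fun _ h => h.2
  · rintro ⟨hπ, k, hk⟩
    refine ⟨hπ.map (mk' N), ?_⟩
    have := index_centralizer_map_dvd (mk'_surjective N) g
    rw [hk] at this
    exact ((Nat.dvd_prime_pow hq).mp this).imp fun _ h => h.2

theorem card_qClassPiElements_eq_card_mul [Fact q.Prime] {N : Subgroup G} [N.Normal] [Finite N]
    (hN : N ≤ center G) (hNq : IsPGroup q N) (hqπ : q ∈ π) :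
    Nat.card (qClassPiElements π q G) = Nat.card N * Nat.card (qClassPiElements π q (G ⧸ N)) := by
  have : (qClassPiElements π q G : Set G) = (↑) ⁻¹' (qClassPiElements π q (G ⧸ N) : Set (G ⧸ N)) :=
    Set.ext fun g => (mk_mem_qClassPiElements_iff hN hNq hqπ).symm
  exact (congrArg (fun s : Set G => Nat.card s) this).trans (card_preimage_mk N _)

theorem factorization_card_qClassPiElements_eq_iff_quotient [Finite G] [Fact q.Prime]
    {N : Subgroup G} [N.Normal] (hN : N ≤ center G) (hNq : IsPGroup q N) (hqπ : q ∈ π) :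
    (Nat.card (qClassPiElements π q G)).factorization q = (Nat.card G).factorization q ↔
      (Nat.card (qClassPiElements π q (G ⧸ N))).factorization q =
        (Nat.card (G ⧸ N)).factorization q := by
  have hS : Nat.card (qClassPiElements π q (G ⧸ N)) ≠ 0 :=
    Nat.card_ne_zero.mpr ⟨⟨⟨1, mem_qClassPiElements_of_mem_center (one_mem _) .one⟩⟩, inferInstance⟩
  rw [card_qClassPiElements_eq_card_mul hN hNq hqπ, card_eq_card_quotient_mul_card_subgroup N,
    Nat.factorization_mul Nat.card_pos.ne' hS,
    Nat.factorization_mul Nat.card_pos.ne' Nat.card_pos.ne', Finsupp.add_apply, Finsupp.add_apply]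
  omega

theorem mem_center_of_sylow_le_centralizer [Finite G] [Fact q.Prime] {g : G}
    (hg : g ∈ qClassPiElements π q G) (Q : Sylow q G) (hQ : (Q : Subgroup G) ≤ centralizer {g}) :
    g ∈ center G := by
  obtain ⟨-, k, hk⟩ := hg
  have hk0 : k = 0 := by
    by_contra hk0
    exact Q.not_dvd_index ((dvd_pow_self q hk0).trans (hk ▸ index_dvd_of_le hQ))
  rwa [hk0, pow_zero, index_eq_one, centralizer_eq_top_iff_subset, Set.singleton_subset_iff] at hk

theorem card_qClassPiElements_modEq_card_piCenter [Finite G] [Fact q.Prime] (Q : Sylow q G) :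
    Nat.card (qClassPiElements π q G) ≡ Nat.card (piCenter π G) [MOD q] := by
  let : MulAction Q (qClassPiElements π q G) :=
    MulAction.compHom _
      ((ConjAct.toConjAct : G ≃* ConjAct G).toMonoidHom.comp (Q : Subgroup G).subtype)
  have hfix (s : qClassPiElements π q G) :
      s ∈ MulAction.fixedPoints Q (qClassPiElements π q G) ↔ (s : G) ∈ center G := by
    have hsmul (x : Q) : ((x • s : qClassPiElements π q G) : G) = x * s * (x : G)⁻¹ :=
      ConjAct.toConjAct_smul _ _
    refine ⟨fun h => mem_center_of_sylow_le_centralizer s.2 Q fun x hx => ?_, fun h x => ?_⟩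
    · have := hsmul ⟨x, hx⟩
      rw [h ⟨x, hx⟩, eq_mul_inv_iff_mul_eq] at this
      exact mem_centralizer_singleton_iff.mpr this.symm
    · rw [Subtype.ext_iff, hsmul, mem_center_iff.mp h, mul_inv_cancel_right]
  have e : MulAction.fixedPoints Q (qClassPiElements π q G) ≃ piCenter π G :=
    (Equiv.subtypeEquivRight hfix).trans <|
      (Equiv.subtypeSubtypeEquivSubtypeInter (· ∈ qClassPiElements π q G) (· ∈ center G)).trans <|
        Equiv.subtypeEquivRight fun g => ⟨fun h => ⟨h.2, h.1.1⟩,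
          fun h => ⟨mem_qClassPiElements_of_mem_center h.1 h.2, h.1⟩⟩
  rw [← Nat.card_congr e]
  exact Q.isPGroup'.card_modEq_card_fixedPoints _

theorem not_dvd_card_qClassPiElements [Finite G] [Fact q.Prime]
    (h : ∀ z ∈ center G, orderOf z ≠ q) : ¬ q ∣ Nat.card (qClassPiElements π q G) := by
  intro hdvd
  obtain ⟨Q⟩ := (inferInstance : Nonempty (Sylow q G))
  obtain ⟨z, hz⟩ := exists_prime_orderOf_dvd_card' q
    (((card_qClassPiElements_modEq_card_piCenter Q).dvd_iff dvd_rfl).mp hdvd)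
  exact h z z.2.1 (by rwa [orderOf_submonoid])

end

def hypercenter (G : Type*) [Group G] : Subgroup G :=
  ⨆ n, Subgroup.upperCentralSeries G n

section

variable {G H : Type*} [Group G] [Group H]

theorem mem_hypercenter_iff {g : G} :
    g ∈ hypercenter G ↔ ∃ n, g ∈ Subgroup.upperCentralSeries G n :=
  mem_iSup_of_directed (Subgroup.upperCentralSeries_mono G).directed_le

theorem map_hypercenter_le {f : G →* H} (hf : Function.Surjective f) :
    (hypercenter G).map f ≤ hypercenter H := by
  rw [hypercenter, Subgroup.map_iSup]
  exact iSup_mono (Subgroup.upperCentralSeries.map hf)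

theorem comap_upperCentralSeries_le_succ {N : Subgroup G} [N.Normal] (hN : N ≤ center G)
    (n : ℕ) :
    (Subgroup.upperCentralSeries (G ⧸ N) n).comap (mk' N) ≤
      Subgroup.upperCentralSeries G (n + 1) := by
  let φ : G ⧸ N →* G ⧸ center G := QuotientGroup.map N (center G) (MonoidHom.id G) hN
  have hφ : Function.Surjective φ :=
    map_surjective_of_surjective _ _ _ QuotientGroup.mk_surjective hN
  intro x hx
  rw [← Subgroup.comap_upperCentralSeries_quotient_center]
  exact Subgroup.upperCentralSeries.map hφ n (mem_map_of_mem φ hx)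

theorem comap_hypercenter_le {N : Subgroup G} [N.Normal] (hN : N ≤ center G) :
    (hypercenter (G ⧸ N)).comap (mk' N) ≤ hypercenter G := fun _ hx =>
  have ⟨n, hn⟩ := mem_hypercenter_iff.mp hx
  mem_hypercenter_iff.mpr ⟨n + 1, comap_upperCentralSeries_le_succ hN n hn⟩

theorem exists_sylow_le_hypercenter_iff_quotient [Finite G] {q : ℕ} [Fact q.Prime]
    {N : Subgroup G} [N.Normal] (hN : N ≤ center G) (hNq : IsPGroup q N) :
    (∃ Q : Sylow q G, (Q : Subgroup G) ≤ hypercenter G) ↔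
      ∃ Q : Sylow q (G ⧸ N), (Q : Subgroup (G ⧸ N)) ≤ hypercenter (G ⧸ N) := by
  constructor
  · rintro ⟨Q, hQ⟩
    exact ⟨Q.mapSurjective (mk'_surjective N),
      (map_mono hQ).trans (map_hypercenter_le (mk'_surjective N))⟩
  · rintro ⟨Q, hQ⟩
    refine ⟨Q.comapOfKerIsPGroup (mk' N) (by rwa [ker_mk']) (by rw [range_mk']; exact le_top), ?_⟩
    exact (comap_mono hQ).trans (comap_hypercenter_le hN)

theorem exists_orderOf_eq_mem_center_of_mem_upperCentralSeries_two {p : ℕ} [Fact p.Prime]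
    {w : G} (hw : w ∈ Subgroup.upperCentralSeries G 2) (hwc : w ∉ center G)
    (hwp : w ^ p ∈ center G) : ∃ z ∈ center G, orderOf z = p := by
  obtain ⟨g, hg⟩ : ∃ g, g * w ≠ w * g := by simpa [mem_center_iff] using hwc
  have hc : ⁅w, g⁆ ∈ center G := by
    rw [← Subgroup.upperCentralSeries_one]
    exact Subgroup.mem_upperCentralSeries_succ_iff.mp hw g
  refine ⟨⁅w, g⁆, hc, orderOf_eq_prime ?_ ?_⟩
  · rw [← commutatorElement_pow_left hc, commutatorElement_eq_one_iff_mul_comm]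
    exact (mem_center_iff.mp hwp g).symm
  · rw [Ne, commutatorElement_eq_one_iff_mul_comm]
    exact fun h => hg h.symm

theorem exists_orderOf_eq_mem_center_of_mem_upperCentralSeries {p : ℕ} [Fact p.Prime] {n : ℕ}
    {y : G} (hy : y ∈ Subgroup.upperCentralSeries G n) (hyp : orderOf y = p) :
    ∃ z ∈ center G, orderOf z = p := by
  have hp : p.Prime := Fact.out
  induction n generalizing G with
  | zero =>
    rw [Subgroup.upperCentralSeries_zero, mem_bot] at hy
    rw [hy, orderOf_one] at hyp
    exact absurd hyp.symm hp.ne_one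
  | succ n ih =>
    by_cases hyc : y ∈ center G
    · exact ⟨y, hyc, hyp⟩
    rw [← Subgroup.comap_upperCentralSeries_quotient_center] at hy
    obtain ⟨w', hw'c, hw'p⟩ := ih hy <| orderOf_eq_prime
      (by rw [mk'_apply, ← QuotientGroup.mk_pow, ← hyp, pow_orderOf_eq_one, QuotientGroup.mk_one])
      (by rwa [mk'_apply, Ne, QuotientGroup.eq_one_iff])
    obtain ⟨w, rfl⟩ := QuotientGroup.mk_surjective w'
    refine exists_orderOf_eq_mem_center_of_mem_upperCentralSeries_two (w := w) ?_ ?_ ?_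
    · rw [← Subgroup.comap_upperCentralSeries_quotient_center, mem_comap,
        Subgroup.upperCentralSeries_one]
      exact hw'c
    · rw [← QuotientGroup.eq_one_iff]
      rintro h
      rw [h, orderOf_one] at hw'p
      exact hp.ne_one hw'p.symm
    · rw [← QuotientGroup.eq_one_iff, QuotientGroup.mk_pow, ← hw'p, pow_orderOf_eq_one]

theorem exists_sylow_le_hypercenter_iff_not_dvd_card [Finite G] {q : ℕ} [Fact q.Prime]
    (h : ∀ z ∈ center G, orderOf z ≠ q) :
    (∃ Q : Sylow q G, (Q : Subgroup G) ≤ hypercenter G) ↔ ¬ q ∣ Nat.card G := by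
  constructor
  · rintro ⟨Q, hQ⟩ hdvd
    obtain ⟨y, hy⟩ := exists_prime_orderOf_dvd_card' q (Q.dvd_card_of_dvd_card hdvd)
    obtain ⟨n, hn⟩ := mem_hypercenter_iff.mp (hQ y.2)
    obtain ⟨z, hz, hzq⟩ := exists_orderOf_eq_mem_center_of_mem_upperCentralSeries (p := q) hn
      (by rwa [orderOf_submonoid])
    exact h z hz hzq
  · intro hndvd
    obtain ⟨Q⟩ := (inferInstance : Nonempty (Sylow q G))
    refine ⟨Q, le_of_eq_of_le (eq_bot_of_card_eq _ ?_) bot_le⟩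
    rw [Q.card_eq_multiplicity, Nat.factorization_eq_zero_of_not_dvd hndvd, pow_zero]

end

end

/-- A Sylow q-subgroup of `G` is contained in the hypercentre iff the q-part of
`|S_q(G_π)|` equals `|G|_q`, for any prime `q ∈ π`. -/
theorem stmt9 {G : Type*} [Group G] [Finite G] (π : Set ℕ) (q : ℕ)
    [Fact q.Prime] (hqπ : q ∈ π) :
    (∃ Q : Sylow q G, (Q : Subgroup G) ≤ ⨆ n : ℕ, upperCentralSeries G n) ↔
      (Nat.card {g : G // IsPiElement π g ∧
          ∃ k : ℕ, (Subgroup.centralizer {g}).index = q ^ k}).factorization q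
        = (Nat.card G).factorization q := by
  change (∃ Q : Sylow q G, (Q : Subgroup G) ≤ hypercenter G) ↔
    (Nat.card (qClassPiElements π q G)).factorization q = (Nat.card G).factorization q
  induction hn : Nat.card G using Nat.strong_induction_on generalizing G with
  | _ n ih =>
  subst hn
  by_cases hz : ∃ z ∈ Subgroup.center G, orderOf z = q
  · obtain ⟨z, hzc, hzq⟩ := hz
    have hN : Subgroup.zpowers z ≤ Subgroup.center G := Subgroup.zpowers_le.mpr hzc
    have := normal_of_le_center hN
    have hNq : IsPGroup q (Subgroup.zpowers z) :=
      IsPGroup.of_card (by rw [Nat.card_zpowers, hzq, pow_one])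
    rw [exists_sylow_le_hypercenter_iff_quotient hN hNq,
      factorization_card_qClassPiElements_eq_iff_quotient hN hNq hqπ]
    refine ih _ ?_ (G := G ⧸ Subgroup.zpowers z) rfl
    rw [Subgroup.card_eq_card_quotient_mul_card_subgroup (Subgroup.zpowers z), Nat.card_zpowers,
      hzq]
    exact (Nat.lt_mul_iff_one_lt_right Nat.card_pos).mpr (Fact.out : q.Prime).one_lt
  · replace hz : ∀ z ∈ Subgroup.center G, orderOf z ≠ q := fun z hzc hzq => hz ⟨z, hzc, hzq⟩
    rw [exists_sylow_le_hypercenter_iff_not_dvd_card hz,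
      Nat.factorization_eq_zero_of_not_dvd (not_dvd_card_qClassPiElements hz), eq_comm,
      Nat.factorization_eq_zero_iff]
    simp [Fact.out, Nat.card_pos.ne']
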